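/- The function Φ_d(· | v) majorizes φ_d: for all u ∈ ℝ^p, (‖u‖ − d)² ≤ max{ g_d(u), h_d(v⊤u/‖v‖ − d) }. -/

import Mathlib

/-! Outside the ball of radius `d` the first term is `φ_d` itself. Inside it, Cauchy–Schwarz gives
`v⊤u/‖v‖ ≤ ‖u‖ < d`, so the Huber argument has absolute value at least `d - ‖u‖ ∈ [0, d]`, and on
that range the Huber function dominates the square. -/

noncomputable def huber (R r : ℝ) : ℝ := if |r| < R then r ^ 2 else 2 * R * |r| - R ^ 2

theorem sq_le_huber {R r s : ℝ} (hs : 0 ≤ s) (hsr : s ≤ |r|) (hsR : s ≤ R) :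
    s ^ 2 ≤ huber R r := by
  unfold huber
  split_ifs with hr
  · rw [← sq_abs r]
    exact pow_le_pow_left₀ hs hsr 2
  · nlinarith

theorem real_inner_div_norm_le_norm {E : Type*} [NormedAddCommGroup E] [InnerProductSpace ℝ E]
    (v u : E) : inner ℝ v u / ‖v‖ ≤ ‖u‖ :=
  div_le_of_le_mul₀ (norm_nonneg v) (norm_nonneg u)
    ((real_inner_le_norm v u).trans_eq (mul_comm _ _))

theorem majorizer_majorizes_general (p : ℕ) (d : ℝ)
    (v : EuclideanSpace ℝ (Fin p)) (u : EuclideanSpace ℝ (Fin p)) :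
    (‖u‖ - d) ^ 2 ≤ max ((max 0 (‖u‖ - d)) ^ 2) (huber d ((inner ℝ v u : ℝ) / ‖v‖ - d)) := by
  rcases le_or_gt d ‖u‖ with h | h
  · exact le_max_of_le_left (by rw [max_eq_right (sub_nonneg.2 h)])
  · refine le_max_of_le_right ?_
    rw [← neg_sub, neg_sq]
    refine sq_le_huber (sub_nonneg.2 h.le) ?_ (sub_le_self d (norm_nonneg u))
    rw [abs_sub_comm]
    exact (sub_le_sub_left (real_inner_div_norm_le_norm v u) d).trans (le_abs_self _)

theorem majorizer_majorizes (p : ℕ) (hp : 1 ≤ p) (d : ℝ) (hd : 0 < d)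
    (v : EuclideanSpace ℝ (Fin p)) (hv : v ≠ 0) (u : EuclideanSpace ℝ (Fin p)) :
    (‖u‖ - d) ^ 2 ≤ max ((max 0 (‖u‖ - d)) ^ 2) (huber d ((inner ℝ v u : ℝ) / ‖v‖ - d)) :=
  majorizer_majorizes_general p d v u
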